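/- Let the primal problem min_x Σᵢ₌₁^k hᵢ(x) + ½‖x − x₀‖² have finite value α and (unique) minimizer x*. For any dual point z ∈ X^k with dual value F(z) := −Σᵢ hᵢ*(zᵢ) − ½‖Σᵢ zᵢ‖² + ⟨x₀, Σᵢ zᵢ⟩ ≥ F₀ for some fixed F₀ ∈ ℝ, the vector v := Σᵢ zᵢ satisfies ½‖x₀ − x* − v‖² ≤ α − F₀; hence the sums Σᵢ zᵢ over any set of dual iterates with nondecreasing dual values are uniformly bounded. -/

import Mathlib

/-!
Weak duality at the primal minimizer: by Fenchel–Young at `x*`,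
`-∑ hᵢ*(zᵢ) ≤ ∑ hᵢ(x*) - ⟪∑ zᵢ, x*⟫`, and completing the square turns the dual value into
`F(z) ≤ α - ½‖x₀ - x* - ∑ zᵢ‖²`.
-/

open RealInnerProductSpace Filter Topology

/-- Fenchel conjugate of an extended-real-valued function on a real inner product space. -/
noncomputable def fenchelConj {X : Type*} [NormedAddCommGroup X] [InnerProductSpace ℝ X]
    (f : X → EReal) (z : X) : EReal :=
  ⨆ x : X, ((⟪z, x⟫ : ℝ) : EReal) - f x

/-- A proper function: not identically `⊤` and never `⊥`. -/
def ProperFn {X : Type*} (f : X → EReal) : Prop :=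
  (∃ x, f x ≠ ⊤) ∧ ∀ x, f x ≠ ⊥

/-- Convexity for extended-real-valued functions. -/
def ConvexFnE {X : Type*} [AddCommGroup X] [Module ℝ X] (f : X → EReal) : Prop :=
  ∀ x y : X, ∀ t : ℝ, 0 < t → t < 1 →
    f (t • x + (1 - t) • y) ≤ (t : EReal) * f x + ((1 - t : ℝ) : EReal) * f y

/-- `z` is a subgradient of `f` at `x`. -/
def IsSubgrad {X : Type*} [NormedAddCommGroup X] [InnerProductSpace ℝ X]
    (f : X → EReal) (x z : X) : Prop :=
  ∀ y : X, f x + ((⟪z, y - x⟫ : ℝ) : EReal) ≤ f y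

open Finset

namespace EReal

theorem coe_finset_sum {ι : Type*} (s : Finset ι) (f : ι → ℝ) :
    ((∑ i ∈ s, f i : ℝ) : EReal) = ∑ i ∈ s, (f i : EReal) :=
  map_sum (⟨⟨Real.toEReal, coe_zero⟩, coe_add⟩ : ℝ →+ EReal) f s

theorem eq_coe_sub_of_add_coe_eq_coe {x : EReal} {a b : ℝ} (h : x + b = a) :
    x = ((a - b : ℝ) : EReal) := by
  induction x using EReal.rec with
  | bot => simp at h
  | top => simp at h
  | coe x =>
    have : x + b = a := mod_cast h
    rw [← this, _root_.add_sub_cancel_right]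

theorem exists_coe_of_sum_eq_coe {ι : Type*} {s : Finset ι} {f : ι → EReal} {a : ℝ}
    (h : ∑ i ∈ s, f i = a) : ∃ c : ι → ℝ, (∀ i ∈ s, f i = c i) ∧ ∑ i ∈ s, c i = a := by
  classical
  have ne_bot : ∀ i ∈ s, f i ≠ ⊥ := fun i hi hbot =>
    coe_ne_bot a (h ▸ WithBot.sum_eq_bot_iff.2 ⟨i, hi, hbot⟩)
  have ne_top : ∀ i ∈ s, f i ≠ ⊤ := by
    intro i hi htop
    have rest_ne_bot : ∑ j ∈ s.erase i, f j ≠ ⊥ := fun hbot =>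
      let ⟨j, hj, hfj⟩ := WithBot.sum_eq_bot_iff.1 hbot
      ne_bot j (mem_of_mem_erase hj) hfj
    rw [← add_sum_erase s f hi, htop, top_add_of_ne_bot rest_ne_bot] at h
    exact top_ne_coe a h
  refine ⟨fun i => (f i).toReal, fun i hi => (coe_toReal (ne_top i hi) (ne_bot i hi)).symm, ?_⟩
  have : ((∑ i ∈ s, (f i).toReal : ℝ) : EReal) = a := by
    rw [coe_finset_sum, ← h]
    exact sum_congr rfl fun i hi => coe_toReal (ne_top i hi) (ne_bot i hi)
  exact mod_cast this

end EReal

section FenchelYoung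

variable {X : Type*} [NormedAddCommGroup X] [InnerProductSpace ℝ X]

theorem inner_sub_le_fenchelConj (f : X → EReal) (x z : X) :
    ((⟪z, x⟫ : ℝ) : EReal) - f x ≤ fenchelConj f z :=
  le_iSup (fun y : X => ((⟪z, y⟫ : ℝ) : EReal) - f y) x

theorem inner_sum_sub_le_sum_fenchelConj {ι : Type*} (s : Finset ι) (h : ι → X → EReal)
    (z : ι → X) {x : X} {a : ℝ} (hx : ∑ i ∈ s, h i x = a) :
    ((⟪∑ i ∈ s, z i, x⟫ - a : ℝ) : EReal) ≤ ∑ i ∈ s, fenchelConj (h i) (z i) := by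
  obtain ⟨c, hc, hca⟩ := EReal.exists_coe_of_sum_eq_coe hx
  rw [sum_inner, ← hca, ← sum_sub_distrib, EReal.coe_finset_sum]
  refine sum_le_sum fun i hi => ?_
  rw [EReal.coe_sub, ← hc i hi]
  exact inner_sub_le_fenchelConj (h i) x (z i)

end FenchelYoung

theorem norm_sub_sub_sq_eq {X : Type*} [NormedAddCommGroup X] [InnerProductSpace ℝ X]
    (x₀ x v : X) :
    ‖x₀ - x - v‖ ^ 2 = ‖x - x₀‖ ^ 2 + ‖v‖ ^ 2 - 2 * ⟪x₀, v⟫ + 2 * ⟪v, x⟫ := by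
  rw [norm_sub_sq_real, norm_sub_rev, inner_sub_left, real_inner_comm v x]
  ring

theorem stmt17_general {X : Type*} [NormedAddCommGroup X] [InnerProductSpace ℝ X]
    (k : ℕ) (h : Fin k → X → EReal)
    (x₀ xstar : X) (α F₀ : ℝ)
    (hval : (∑ i, h i xstar) + ((((1:ℝ)/2) * ‖xstar - x₀‖^2 : ℝ) : EReal) = (α : EReal))
    (z : Fin k → X)
    (hF : (F₀ : EReal) ≤
      -(∑ i, fenchelConj (h i) (z i)) - ((((1:ℝ)/2) * ‖∑ i, z i‖^2 : ℝ) : EReal)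
        + ((⟪x₀, ∑ i, z i⟫ : ℝ) : EReal)) :
    ((1:ℝ)/2) * ‖x₀ - xstar - ∑ i, z i‖^2 ≤ α - F₀ := by
  set v := ∑ i, z i
  have hconj := inner_sum_sub_le_sum_fenchelConj univ h z
    (EReal.eq_coe_sub_of_add_coe_eq_coe hval)
  have hdual : F₀ ≤ -(⟪v, xstar⟫ - (α - 1 / 2 * ‖xstar - x₀‖ ^ 2)) - 1 / 2 * ‖v‖ ^ 2
      + ⟪x₀, v⟫ := by
    have := hF.trans <| add_le_add (EReal.sub_le_sub (EReal.neg_le_neg_iff.2 hconj) le_rfl) le_rfl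
    exact mod_cast this
  rw [norm_sub_sub_sq_eq]
  linarith

theorem stmt17 {X : Type*} [NormedAddCommGroup X] [InnerProductSpace ℝ X] [FiniteDimensional ℝ X]
    (k : ℕ) (h : Fin k → X → EReal) (hp : ∀ i, ProperFn (h i))
    (hl : ∀ i, LowerSemicontinuous (h i)) (hc : ∀ i, ConvexFnE (h i))
    (x₀ xstar : X) (α F₀ : ℝ)
    (hval : (∑ i, h i xstar) + ((((1:ℝ)/2) * ‖xstar - x₀‖^2 : ℝ) : EReal) = (α : EReal))
    (hlb : ∀ x : X, (α : EReal) ≤ (∑ i, h i x) + ((((1:ℝ)/2) * ‖x - x₀‖^2 : ℝ) : EReal))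
    (z : Fin k → X)
    (hF : (F₀ : EReal) ≤
      -(∑ i, fenchelConj (h i) (z i)) - ((((1:ℝ)/2) * ‖∑ i, z i‖^2 : ℝ) : EReal)
        + ((⟪x₀, ∑ i, z i⟫ : ℝ) : EReal)) :
    ((1:ℝ)/2) * ‖x₀ - xstar - ∑ i, z i‖^2 ≤ α - F₀ :=
  stmt17_general k h x₀ xstar α F₀ hval z hF
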